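/- Let h > 0 and f : ℝ≥0 → ℝ continuous with f(0) = 0, and let t_n and s_n be the n-th returning time and n-th exit time of Λ_{0,h}(f) at level 0. Then the h-cut f_h := f − Λ_{0,h}(f) is non-increasing on each interval [t_n, s_{n+1}] and non-decreasing on each interval [s_{n+1}, t_{n+1}] (whenever these times are finite). -/

import Mathlib

open Set
open scoped NNReal ENNReal

/-- Solution data for the two-sided Skorohod reflection problem of `f` on `[0,h]`:
`c0` and `ch` are the compensators at `0` and at `h`,
and `fun t => f t + ch t + c0 t` is the reflected path `Λ_{0,h}(f)`.
The support conditions on the measures `dc⁰` and `d(−cʰ)` are phrased as: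
the compensator is constant on every (closed) interval on which the reflected
path avoids the corresponding boundary. -/
structure SkorohodPair (h : ℝ) (f c0 ch : ℝ≥0 → ℝ) : Prop where
  cont0 : Continuous c0
  conth : Continuous ch
  init0 : c0 0 = 0
  inith : ch 0 = 0
  mem_Icc : ∀ t, f t + ch t + c0 t ∈ Set.Icc (0 : ℝ) h
  mono0 : Monotone c0
  antih : Antitone ch
  flat0 : ∀ a b : ℝ≥0, a ≤ b → (∀ t ∈ Set.Icc a b, f t + ch t + c0 t ≠ 0) → c0 b = c0 a
  flath : ∀ a b : ℝ≥0, a ≤ b → (∀ t ∈ Set.Icc a b, f t + ch t + c0 t ≠ h) → ch b = ch a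

/-- `eInf S` : infimum of a set of times, in `ℝ≥0∞`, with the convention `inf ∅ = ∞`. -/
noncomputable def eInf (S : Set ℝ≥0) : ℝ≥0∞ := sInf ((fun x : ℝ≥0 => (x : ℝ≥0∞)) '' S)

/-- `eSup S` : supremum of a set of times, in `ℝ≥0∞`. -/
noncomputable def eSup (S : Set ℝ≥0) : ℝ≥0∞ := sSup ((fun x : ℝ≥0 => (x : ℝ≥0∞)) '' S)

/-- `inf_{[a,s]} f`, where the left endpoint `a` may be infinite. -/
noncomputable def infBetween (f : ℝ≥0 → ℝ) (a : ℝ≥0∞) (s : ℝ≥0) : ℝ :=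
  sInf (f '' {u : ℝ≥0 | a ≤ (u : ℝ≥0∞) ∧ u ≤ s})

/-- `sup_{[a,s]} f`, where the left endpoint `a` may be infinite. -/
noncomputable def supBetween (f : ℝ≥0 → ℝ) (a : ℝ≥0∞) (s : ℝ≥0) : ℝ :=
  sSup (f '' {u : ℝ≥0 | a ≤ (u : ℝ≥0∞) ∧ u ≤ s})

/-- `θ_{n+1} = inf {s > τ_n : f s − h = inf_{[τ_n,s]} f}`. -/
noncomputable def thetaNext (h : ℝ) (f : ℝ≥0 → ℝ) (τ : ℝ≥0∞) : ℝ≥0∞ :=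
  eInf {s : ℝ≥0 | τ < (s : ℝ≥0∞) ∧ f s - h = infBetween f τ s}

/-- `τ_{n+1} = inf {s > θ_{n+1} : sup_{[θ_{n+1},s]} f = f s + h}`. -/
noncomputable def tauNext (h : ℝ) (f : ℝ≥0 → ℝ) (τ : ℝ≥0∞) : ℝ≥0∞ :=
  eInf {s : ℝ≥0 | thetaNext h f τ < (s : ℝ≥0∞) ∧
    supBetween f (thetaNext h f τ) s = f s + h}

/-- The sequence `(τ_n)` of completion times of the sub-excursions of height `h`. -/
noncomputable def tauSeq (h : ℝ) (f : ℝ≥0 → ℝ) : ℕ → ℝ≥0∞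
  | 0 => 0
  | n + 1 => tauNext h f (tauSeq h f n)

/-- `σ_{n+1} = sup {s ∈ [τ_n, τ_{n+1}] : f s = inf_{[τ_n,s]} f}` (and `σ₀ = 0`). -/
noncomputable def sigmaSeq (h : ℝ) (f : ℝ≥0 → ℝ) : ℕ → ℝ≥0∞
  | 0 => 0
  | n + 1 => eSup {s : ℝ≥0 | tauSeq h f n ≤ (s : ℝ≥0∞) ∧ (s : ℝ≥0∞) ≤ tauSeq h f (n + 1) ∧
      f s = infBetween f (tauSeq h f n) s}

/-- The returning times of a path `Λ` to level `0` after visiting level `h`: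
`t₀ = 0`, `T_{n+1} = inf {u > t_n : Λ u = h}`, `t_{n+1} = inf {u > T_{n+1} : Λ u = 0}`. -/
noncomputable def retSeq (h : ℝ) (Λ : ℝ≥0 → ℝ) : ℕ → ℝ≥0∞
  | 0 => 0
  | n + 1 =>
      eInf {u : ℝ≥0 |
        eInf {v : ℝ≥0 | retSeq h Λ n < (v : ℝ≥0∞) ∧ Λ v = h} < (u : ℝ≥0∞) ∧ Λ u = 0}

/-- The exit times of `Λ` at level `0`: `s_{n+1} = sup {u ∈ [t_n, t_{n+1}) : Λ u = 0}`. -/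
noncomputable def exitSeq (h : ℝ) (Λ : ℝ≥0 → ℝ) : ℕ → ℝ≥0∞
  | 0 => 0
  | n + 1 => eSup {u : ℝ≥0 | retSeq h Λ n ≤ (u : ℝ≥0∞) ∧ (u : ℝ≥0∞) < retSeq h Λ (n + 1) ∧
      Λ u = 0}

/-!
Before the exit time `s_{n+1}` the reflected path cannot reach `h`: it is `0` at `s_{n+1}` and
first reaches `h` after `t_n` at `T_{n+1} > s_{n+1}`. So `cʰ` is flat on `[t_n, s_{n+1}]` and
`f_h = −c⁰ − cʰ` is non-increasing there because `c⁰` is non-decreasing. After `s_{n+1}` the path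
does not return to `0` before `t_{n+1}`, so `c⁰` is flat on `[s_{n+1}, t_{n+1}]` and `f_h` is
non-decreasing there because `cʰ` is non-increasing.
-/

section ExtendedBounds

variable {S : Set ℝ≥0} {u t : ℝ≥0}

lemma eInf_le_coe (hu : u ∈ S) : eInf S ≤ u :=
  sInf_le (mem_image_of_mem _ hu)

lemma le_eInf {τ : ℝ≥0∞} (hτ : ∀ u ∈ S, τ ≤ u) : τ ≤ eInf S :=
  le_sInf (forall_mem_image.2 hτ)

lemma coe_le_eSup (hu : u ∈ S) : (u : ℝ≥0∞) ≤ eSup S :=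
  le_sSup (mem_image_of_mem _ hu)

lemma eSup_le {τ : ℝ≥0∞} (hτ : ∀ u ∈ S, (u : ℝ≥0∞) ≤ τ) : eSup S ≤ τ :=
  sSup_le (forall_mem_image.2 hτ)

lemma mem_closure_of_eInf_eq (ht : eInf S = t) : t ∈ closure S := by
  rcases S.eq_empty_or_nonempty with rfl | hS
  · simp [eInf] at ht
  rw [ENNReal.isEmbedding_coe.closure_eq_preimage_closure_image, mem_preimage, ← ht]
  exact sInf_mem_closure (hS.image _)

lemma mem_closure_of_eSup_eq (hS : S.Nonempty) (ht : eSup S = t) : t ∈ closure S := by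
  rw [ENNReal.isEmbedding_coe.closure_eq_preimage_closure_image, mem_preimage, ← ht]
  exact sSup_mem_closure (hS.image _)

end ExtendedBounds

noncomputable def firstHitAfter (c : ℝ) (Λ : ℝ≥0 → ℝ) (τ : ℝ≥0∞) : ℝ≥0∞ :=
  eInf {u : ℝ≥0 | τ < (u : ℝ≥0∞) ∧ Λ u = c}

section FirstHit

variable {c : ℝ} {Λ : ℝ≥0 → ℝ} {τ : ℝ≥0∞} {u : ℝ≥0}

lemma le_firstHitAfter : τ ≤ firstHitAfter c Λ τ :=
  le_eInf fun _ hu => hu.1.le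

lemma firstHitAfter_le (hτu : τ < u) (hu : Λ u = c) : firstHitAfter c Λ τ ≤ u :=
  eInf_le_coe ⟨hτu, hu⟩

lemma apply_ne_of_lt_firstHitAfter (hτu : τ < u) (hu : (u : ℝ≥0∞) < firstHitAfter c Λ τ) :
    Λ u ≠ c :=
  fun hΛu => (firstHitAfter_le hτu hΛu).not_gt hu

lemma apply_firstHitAfter (hΛ : Continuous Λ) {t : ℝ≥0} (ht : firstHitAfter c Λ τ = t) :
    Λ t = c :=
  closure_minimal (fun _ hu => hu.2) (isClosed_eq hΛ continuous_const)
    (mem_closure_of_eInf_eq ht)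

end FirstHit

section ReturnTimes

variable {h : ℝ} {Λ : ℝ≥0 → ℝ} {n : ℕ} {u : ℝ≥0}

lemma retSeq_succ :
    retSeq h Λ (n + 1) = firstHitAfter 0 Λ (firstHitAfter h Λ (retSeq h Λ n)) :=
  rfl

lemma apply_retSeq (hΛ : Continuous Λ) (hΛ0 : Λ 0 = 0) {t : ℝ≥0} (ht : retSeq h Λ n = t) :
    Λ t = 0 := by
  cases n with
  | zero => rw [show t = 0 by simpa [retSeq, eq_comm] using ht, hΛ0]
  | succ n => exact apply_firstHitAfter hΛ ht

lemma apply_exitSeq (hΛ : Continuous Λ) (hΛ0 : Λ 0 = 0) {s : ℝ≥0} (hs : exitSeq h Λ n = s) :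
    Λ s = 0 := by
  cases n with
  | zero => rw [show s = 0 by simpa [exitSeq, eq_comm] using hs, hΛ0]
  | succ n =>
    set E := {u : ℝ≥0 | retSeq h Λ n ≤ (u : ℝ≥0∞) ∧ (u : ℝ≥0∞) < retSeq h Λ (n + 1) ∧ Λ u = 0}
    rcases E.eq_empty_or_nonempty with hE | hE
    · rw [show s = 0 by simpa [exitSeq, E, hE, eSup, eq_comm] using hs, hΛ0]
    · exact closure_minimal (fun _ hu => hu.2.2) (isClosed_eq hΛ continuous_const)
        (mem_closure_of_eSup_eq hE hs)

lemma le_exitSeq_succ (hu0 : retSeq h Λ n ≤ u) (hu1 : (u : ℝ≥0∞) < retSeq h Λ (n + 1))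
    (hu : Λ u = 0) : (u : ℝ≥0∞) ≤ exitSeq h Λ (n + 1) :=
  coe_le_eSup ⟨hu0, hu1, hu⟩

lemma exitSeq_succ_le_firstHitAfter :
    exitSeq h Λ (n + 1) ≤ firstHitAfter h Λ (retSeq h Λ n) :=
  eSup_le fun _ hu => not_lt.1 fun hTu => (firstHitAfter_le hTu hu.2.2).not_gt hu.2.1

variable (hΛ : Continuous Λ) (hΛ0 : Λ 0 = 0) (hh : h ≠ 0) (hfin : retSeq h Λ (n + 1) ≠ ⊤)
include hΛ hh hfin

lemma firstHitAfter_lt_retSeq_succ : firstHitAfter h Λ (retSeq h Λ n) < retSeq h Λ (n + 1) := by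
  rw [retSeq_succ] at hfin ⊢
  refine le_firstHitAfter.lt_of_ne fun hT => ?_
  lift firstHitAfter 0 Λ (firstHitAfter h Λ (retSeq h Λ n)) to ℝ≥0 using hfin with t ht
  exact hh ((apply_firstHitAfter hΛ hT).symm.trans (apply_firstHitAfter hΛ ht.symm))

include hΛ0

lemma retSeq_le_exitSeq_succ : retSeq h Λ n ≤ exitSeq h Λ (n + 1) := by
  have ht1 := le_firstHitAfter.trans_lt (firstHitAfter_lt_retSeq_succ hΛ hh hfin)
  lift retSeq h Λ n to ℝ≥0 using (ht1.trans_le le_top).ne with t ht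
  exact le_exitSeq_succ ht.ge ht1 (apply_retSeq hΛ hΛ0 ht.symm)

lemma exitSeq_succ_lt_firstHitAfter :
    exitSeq h Λ (n + 1) < firstHitAfter h Λ (retSeq h Λ n) := by
  refine exitSeq_succ_le_firstHitAfter.lt_of_ne fun hsT => ?_
  have hT := (firstHitAfter_lt_retSeq_succ hΛ hh hfin).trans_le le_top
  lift firstHitAfter h Λ (retSeq h Λ n) to ℝ≥0 using hT.ne with T hT
  exact hh ((apply_firstHitAfter hΛ hT.symm).symm.trans (apply_exitSeq hΛ hΛ0 hsT))

lemma apply_ne_of_retSeq_le_of_le_exitSeq_succ (hu0 : retSeq h Λ n ≤ u)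
    (hus : (u : ℝ≥0∞) ≤ exitSeq h Λ (n + 1)) : Λ u ≠ h := by
  rcases hu0.eq_or_lt with ht | ht
  · rw [apply_retSeq hΛ hΛ0 ht]
    exact hh.symm
  · exact apply_ne_of_lt_firstHitAfter ht
      (hus.trans_lt (exitSeq_succ_lt_firstHitAfter hΛ hΛ0 hh hfin))

lemma apply_ne_zero_of_exitSeq_succ_lt_of_lt_retSeq_succ (hsu : exitSeq h Λ (n + 1) < u)
    (hu1 : (u : ℝ≥0∞) < retSeq h Λ (n + 1)) : Λ u ≠ 0 := fun hu =>
  (le_exitSeq_succ ((retSeq_le_exitSeq_succ hΛ hΛ0 hh hfin).trans hsu.le) hu1 hu).not_gt hsu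

end ReturnTimes

namespace SkorohodPair

variable {h : ℝ} {f c0 ch : ℝ≥0 → ℝ} {a b : ℝ≥0}

lemma cut_le_cut_of_ne_upper (hp : SkorohodPair h f c0 ch) (hab : a ≤ b)
    (hne : ∀ t ∈ Icc a b, f t + ch t + c0 t ≠ h) :
    f b - (f b + ch b + c0 b) ≤ f a - (f a + ch a + c0 a) := by
  have hch : ch b = ch a := hp.flath a b hab hne
  linarith [hp.mono0 hab]

lemma c0_eq_of_ne_lower (hp : SkorohodPair h f c0 ch) (hab : a ≤ b)
    (hne : ∀ t ∈ Ioo a b, f t + ch t + c0 t ≠ 0) : c0 b = c0 a := by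
  rcases hab.eq_or_lt with rfl | hab
  · rfl
  obtain ⟨m, ham, hmb⟩ := exists_between hab
  -- `flat0` only applies to closed subintervals of `(a, b)`; continuity reaches the endpoints.
  have hconst : EqOn c0 (fun _ => c0 m) (Ioo a b) := by
    intro x hx
    rcases le_total x m with hxm | hmx
    · exact (hp.flat0 x m hxm fun t ht => hne t ⟨hx.1.trans_le ht.1, ht.2.trans_lt hmb⟩).symm
    · exact hp.flat0 m x hmx fun t ht => hne t ⟨ham.trans_le ht.1, ht.2.trans_lt hx.2⟩
  have hclosure := hconst.closure hp.cont0 continuous_const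
  rw [closure_Ioo hab.ne] at hclosure
  rw [hclosure ⟨hab.le, le_rfl⟩, hclosure ⟨le_rfl, hab.le⟩]

lemma cut_le_cut_of_ne_lower (hp : SkorohodPair h f c0 ch) (hab : a ≤ b)
    (hne : ∀ t ∈ Ioo a b, f t + ch t + c0 t ≠ 0) :
    f a - (f a + ch a + c0 a) ≤ f b - (f b + ch b + c0 b) := by
  have hc0 : c0 b = c0 a := hp.c0_eq_of_ne_lower hab hne
  linarith [hp.antih hab]

end SkorohodPair

theorem h_cut_monotone_between_times
    (h : ℝ) (hh : 0 < h) (f c0 ch : ℝ≥0 → ℝ) (hf : Continuous f) (hf0 : f 0 = 0)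
    (hp : SkorohodPair h f c0 ch)
    (Λ : ℝ≥0 → ℝ) (hΛ : ∀ t, Λ t = f t + ch t + c0 t)
    (n : ℕ) (hfin : retSeq h Λ (n + 1) < ⊤) :
    (∀ a b : ℝ≥0, retSeq h Λ n ≤ (a : ℝ≥0∞) → a ≤ b → (b : ℝ≥0∞) ≤ exitSeq h Λ (n + 1) →
      f b - Λ b ≤ f a - Λ a) ∧
    (∀ a b : ℝ≥0, exitSeq h Λ (n + 1) ≤ (a : ℝ≥0∞) → a ≤ b → (b : ℝ≥0∞) ≤ retSeq h Λ (n + 1) →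
      f a - Λ a ≤ f b - Λ b) := by
  have hΛc : Continuous Λ := by
    rw [funext hΛ]
    exact (hf.add hp.conth).add hp.cont0
  have hΛ0 : Λ 0 = 0 := by rw [hΛ, hf0, hp.inith, hp.init0]; norm_num
  simp only [hΛ]
  refine ⟨fun a b ha hab hb => ?_, fun a b ha hab hb => ?_⟩
  · refine hp.cut_le_cut_of_ne_upper hab fun t ht => hΛ t ▸ ?_
    exact apply_ne_of_retSeq_le_of_le_exitSeq_succ hΛc hΛ0 hh.ne' hfin.ne
      (ha.trans (by exact_mod_cast ht.1)) (le_trans (by exact_mod_cast ht.2) hb)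
  · refine hp.cut_le_cut_of_ne_lower hab fun t ht => hΛ t ▸ ?_
    exact apply_ne_zero_of_exitSeq_succ_lt_of_lt_retSeq_succ hΛc hΛ0 hh.ne' hfin.ne
      (ha.trans_lt (by exact_mod_cast ht.1)) (lt_of_lt_of_le (by exact_mod_cast ht.2) hb)
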